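/- Given Hilbert spaces V, Q, a coercive bounded sesquilinear form a on V×V and a bounded form b on V×Q satisfying the inf-sup condition sup_{v∈V, v≠0} |b(v,q)|/‖v‖_V ≥ β̄‖q‖_Q for all q ∈ Q with β̄ > 0, the combined form A((u,p),(v,q)) := a(u,v)+b(v,p)−b(u,q) on X := V×Q satisfies a uniform inf-sup condition: there exists γ > 0 such that for all (w,r) ∈ X, sup_{(v,q)∈X, (v,q)≠0} |A((v,q),(w,r))|/‖(v,q)‖_X ≥ γ‖(w,r)‖_X. -/

import Mathlib

/-!
Test the combined form at `(w, r)` with the pair `(w - t • u, r)`, where `u` is a unit-ball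
vector for which `b u r` is real and at least `βb * ‖r‖` (a phase rotation of the inf-sup
vector). The terms `b w r` cancel, coercivity of `a` controls `‖w‖`, the term `t * b u r`
controls `‖r‖`, and with `t` proportional to `‖r‖` the cross term `t * a u w` is absorbed by
`2xy ≤ x² + y²`.
-/

open ComplexConjugate

theorem LinearMap.exists_norm_le_one_map_smul_eq_norm {V : Type*} [AddCommGroup V] [Module ℂ V]
    (f : V →ₗ[ℂ] ℂ) (v : V) : ∃ c : ℂ, ‖c‖ ≤ 1 ∧ f (c • v) = ‖f v‖ := by
  refine ⟨conj (f v) / ‖f v‖, ?_, ?_⟩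
  · rw [norm_div, Complex.norm_conj, Complex.norm_real, norm_norm]
    exact div_self_le_one _
  · -- at `f v = 0` the junk value `0 / 0 = 0` still gives the right answer
    rw [map_smul, smul_eq_mul, div_mul_eq_mul_div, Complex.conj_mul', sq,
      mul_self_div_self]

section CombinedForm

variable {V Q : Type*} [NormedAddCommGroup V] [NormedSpace ℂ V]
  [NormedAddCommGroup Q] [NormedSpace ℂ Q]

theorem le_of_coercive_of_bounded {a : V →ₗ[ℂ] V →ₗ⋆[ℂ] ℂ} {Ca α : ℝ}
    (hCa : ∀ u v, ‖a u v‖ ≤ Ca * ‖u‖ * ‖v‖) (hcoer : ∀ v : V, α * ‖v‖ ^ 2 ≤ (a v v).re)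
    {v : V} (hv : v ≠ 0) : α ≤ Ca := by
  have hpos : 0 < ‖v‖ ^ 2 := by positivity
  refine le_of_mul_le_mul_right ?_ hpos
  calc α * ‖v‖ ^ 2 ≤ (a v v).re := hcoer v
    _ ≤ ‖a v v‖ := Complex.re_le_norm _
    _ ≤ Ca * ‖v‖ ^ 2 := by simpa [mul_assoc, sq] using hCa v v

theorem exists_norm_le_one_le_re_of_infSup {b : V →ₗ[ℂ] Q →ₗ⋆[ℂ] ℂ} {βb : ℝ}
    (hinfsup : ∀ q : Q, ∃ v : V, ‖v‖ = 1 ∧ βb * ‖q‖ ≤ ‖b v q‖) (r : Q) :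
    ∃ u : V, ‖u‖ ≤ 1 ∧ βb * ‖r‖ ≤ (b u r).re := by
  obtain ⟨v, hv, hbv⟩ := hinfsup r
  obtain ⟨c, hc, hbc⟩ := (b.flip r).exists_norm_le_one_map_smul_eq_norm v
  refine ⟨c • v, by rwa [norm_smul, hv, mul_one], ?_⟩
  rw [← LinearMap.flip_apply b, hbc, Complex.ofReal_re]
  exact hbv

theorem combined_form_sub_smul (a : V →ₗ[ℂ] V →ₗ⋆[ℂ] ℂ) (b : V →ₗ[ℂ] Q →ₗ⋆[ℂ] ℂ)
    (w u : V) (r : Q) (t : ℂ) :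
    a (w - t • u) w + b w r - b (w - t • u) r = a w w - t * a u w + t * b u r := by
  simp only [map_sub, map_smul, LinearMap.sub_apply, LinearMap.smul_apply, smul_eq_mul]
  ring

theorem le_re_combined_form_sub_smul {a : V →ₗ[ℂ] V →ₗ⋆[ℂ] ℂ} {b : V →ₗ[ℂ] Q →ₗ⋆[ℂ] ℂ}
    {Ca α βb : ℝ} (hCa : ∀ u v, ‖a u v‖ ≤ Ca * ‖u‖ * ‖v‖) (hCa₀ : 0 ≤ Ca)
    (hcoer : ∀ v : V, α * ‖v‖ ^ 2 ≤ (a v v).re) {w u : V} {r : Q} (hu : ‖u‖ ≤ 1)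
    (hbu : βb * ‖r‖ ≤ (b u r).re) {t : ℝ} (ht : 0 ≤ t) :
    α * ‖w‖ ^ 2 - t * (Ca * ‖w‖) + t * (βb * ‖r‖) ≤
      (a (w - (t : ℂ) • u) w + b w r - b (w - (t : ℂ) • u) r).re := by
  have hau : (a u w).re ≤ Ca * ‖w‖ :=
    calc (a u w).re ≤ ‖a u w‖ := Complex.re_le_norm _
      _ ≤ Ca * ‖u‖ * ‖w‖ := hCa u w
      _ ≤ Ca * 1 * ‖w‖ := by gcongr
      _ = Ca * ‖w‖ := by rw [mul_one]
  rw [combined_form_sub_smul, Complex.add_re, Complex.sub_re, Complex.re_ofReal_mul,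
    Complex.re_ofReal_mul]
  nlinarith [hcoer w, mul_le_mul_of_nonneg_left hau ht, mul_le_mul_of_nonneg_left hbu ht]

theorem norm_sub_ofReal_smul_le {w u : V} (hu : ‖u‖ ≤ 1) {t : ℝ} (ht : 0 ≤ t) :
    ‖w - (t : ℂ) • u‖ ≤ ‖w‖ + t :=
  calc ‖w - (t : ℂ) • u‖ ≤ ‖w‖ + t * ‖u‖ := (norm_sub_le _ _).trans_eq <| by
        rw [norm_smul, Complex.norm_real, Real.norm_of_nonneg ht]
    _ ≤ ‖w‖ + t := by grw [hu, mul_one]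

end CombinedForm

theorem half_mul_min_mul_le {α : ℝ} (hα : 0 ≤ α) (κ W R : ℝ) :
    α / 2 * min 1 (κ ^ 2) * (W ^ 2 + R ^ 2) ≤ α * (W ^ 2 - κ * R * W + κ ^ 2 * R ^ 2) := by
  have hmin : min 1 (κ ^ 2) * (W ^ 2 + R ^ 2) ≤ W ^ 2 + κ ^ 2 * R ^ 2 := by
    nlinarith [min_le_left 1 (κ ^ 2), min_le_right 1 (κ ^ 2), sq_nonneg W, sq_nonneg R]
  have hhalf : W ^ 2 + κ ^ 2 * R ^ 2 ≤ 2 * (W ^ 2 - κ * R * W + κ ^ 2 * R ^ 2) := by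
    nlinarith [sq_nonneg (W - κ * R)]
  nlinarith [mul_le_mul_of_nonneg_left (hmin.trans hhalf) hα]

theorem sq_add_sq_le_of_le_add {x W R κ : ℝ} (hx : 0 ≤ x) (hxW : x ≤ W + κ * R) :
    x ^ 2 + R ^ 2 ≤ (2 + 2 * κ ^ 2) * (W ^ 2 + R ^ 2) := by
  nlinarith [sq_nonneg (W - κ * R), sq_nonneg R, pow_le_pow_left₀ hx hxW 2]

theorem div_mul_sqrt_mul_sqrt_le {c M X Y : ℝ} (hc : 0 ≤ c) (hM : 0 < M) (hX : 0 ≤ X)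
    (hY : Y ≤ M ^ 2 * X) : c / M * √X * √Y ≤ c * X := by
  have hsqrt : √Y ≤ M * √X := by
    rw [← Real.sqrt_sq hM.le, ← Real.sqrt_mul (sq_nonneg M)]
    exact Real.sqrt_le_sqrt hY
  calc c / M * √X * √Y ≤ c / M * √X * (M * √X) := by gcongr
    _ = c * (√X * √X) * (M / M) := by ring
    _ = c * X := by rw [Real.mul_self_sqrt hX, div_self hM.ne', mul_one]

theorem combined_form_infSup_general
    {V Q : Type*} [NormedAddCommGroup V] [InnerProductSpace ℂ V]
    [NormedAddCommGroup Q] [InnerProductSpace ℂ Q]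
    (a : V →ₗ[ℂ] V →ₗ⋆[ℂ] ℂ) (b : V →ₗ[ℂ] Q →ₗ⋆[ℂ] ℂ)
    (Ca : ℝ) (hCa : ∀ u v, ‖a u v‖ ≤ Ca * ‖u‖ * ‖v‖)
    (α : ℝ) (hα : 0 < α) (hcoer : ∀ v : V, α * ‖v‖ ^ 2 ≤ (a v v).re)
    (βb : ℝ) (hβb : 0 < βb)
    (hinfsup : ∀ q : Q, ∃ v : V, ‖v‖ = 1 ∧ βb * ‖q‖ ≤ ‖b v q‖) :
    ∃ γ > 0, ∀ (w : V) (r : Q), ∃ (v : V) (q : Q), ¬(v = 0 ∧ q = 0) ∧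
      γ * Real.sqrt (‖w‖ ^ 2 + ‖r‖ ^ 2) * Real.sqrt (‖v‖ ^ 2 + ‖q‖ ^ 2) ≤
        ‖a v w + b w q - b v r‖ := by
  obtain ⟨v₀, hv₀, -⟩ := hinfsup 0
  have hv₀_ne : v₀ ≠ 0 := norm_ne_zero_iff.mp (hv₀ ▸ one_ne_zero)
  have hαCa : α ≤ Ca := le_of_coercive_of_bounded hCa hcoer hv₀_ne
  have hCa_pos : 0 < Ca := hα.trans_le hαCa
  set κ := βb / Ca
  refine ⟨α / 2 * min 1 (κ ^ 2) / √(2 + 2 * κ ^ 2), by positivity, fun w r => ?_⟩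
  by_cases hwr : w = 0 ∧ r = 0
  · exact ⟨v₀, 0, fun h => hv₀_ne h.1, by simp [hwr.1, hwr.2]⟩
  obtain ⟨u, hu, hbu⟩ := exists_norm_le_one_le_re_of_infSup hinfsup r
  set t := α / Ca * (κ * ‖r‖)
  have ht : 0 ≤ t := by positivity
  have hnorm : ‖w - (t : ℂ) • u‖ ≤ ‖w‖ + κ * ‖r‖ := (norm_sub_ofReal_smul_le hu ht).trans <| by
    gcongr
    exact mul_le_of_le_one_left (by positivity) ((div_le_one hCa_pos).2 hαCa)
  refine ⟨w - (t : ℂ) • u, r, fun h => hwr ⟨by simpa [t, h.2] using h.1, h.2⟩, ?_⟩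
  refine (div_mul_sqrt_mul_sqrt_le (by positivity) (by positivity) (by positivity) ?_).trans ?_
  · rw [Real.sq_sqrt (by positivity)]
    exact sq_add_sq_le_of_le_add (norm_nonneg _) hnorm
  calc α / 2 * min 1 (κ ^ 2) * (‖w‖ ^ 2 + ‖r‖ ^ 2)
      ≤ α * (‖w‖ ^ 2 - κ * ‖r‖ * ‖w‖ + κ ^ 2 * ‖r‖ ^ 2) := half_mul_min_mul_le hα.le _ _ _
    _ = α * ‖w‖ ^ 2 - t * (Ca * ‖w‖) + t * (βb * ‖r‖) := by
      simp only [t, κ]; field_simp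
    _ ≤ _ := le_re_combined_form_sub_smul hCa hCa_pos.le hcoer hu hbu ht
    _ ≤ _ := Complex.re_le_norm _

/-- abstract inf-sup for the combined form
`A((u,p),(v,q)) := a(u,v) + b(v,p) − b(u,q)` on `X = V × Q`, given a bounded
coercive form `a` and a bounded form `b` satisfying an inf-sup condition. -/
theorem combined_form_infSup
    {V Q : Type*} [NormedAddCommGroup V] [InnerProductSpace ℂ V] [CompleteSpace V]
    [NormedAddCommGroup Q] [InnerProductSpace ℂ Q] [CompleteSpace Q]
    (a : V →ₗ[ℂ] V →ₗ⋆[ℂ] ℂ) (b : V →ₗ[ℂ] Q →ₗ⋆[ℂ] ℂ)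
    (Ca : ℝ) (hCa : ∀ u v, ‖a u v‖ ≤ Ca * ‖u‖ * ‖v‖)
    (α : ℝ) (hα : 0 < α) (hcoer : ∀ v : V, α * ‖v‖ ^ 2 ≤ (a v v).re)
    (Cb : ℝ) (hCb : ∀ v q, ‖b v q‖ ≤ Cb * ‖v‖ * ‖q‖)
    (βb : ℝ) (hβb : 0 < βb)
    (hinfsup : ∀ q : Q, ∃ v : V, ‖v‖ = 1 ∧ βb * ‖q‖ ≤ ‖b v q‖) :
    ∃ γ > 0, ∀ (w : V) (r : Q), ∃ (v : V) (q : Q), ¬(v = 0 ∧ q = 0) ∧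
      γ * Real.sqrt (‖w‖ ^ 2 + ‖r‖ ^ 2) * Real.sqrt (‖v‖ ^ 2 + ‖q‖ ^ 2) ≤
        ‖a v w + b w q - b v r‖ :=
  combined_form_infSup_general a b Ca hCa α hα hcoer βb hβb hinfsup
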